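/- SDP form of Uhlmann's theorem: Let Y and Z be finite-dimensional complex vector spaces, let u, v ∈ Y⊗Z, and let P = Tr_Y(u u*) and Q = Tr_Y(v v*). Then F(P, Q)² = max{⟨v v*, W⟩ : W ∈ Pos(Y⊗Z), Tr_Y(W) ≤ P}, where F(P,Q) = Tr√(√P Q √P) is the fidelity, ⟨A,B⟩ = Tr(A*B), and ≤ is the Loewner order. -/

import Mathlib

open Matrix
open scoped Kronecker ComplexOrder

noncomputable section

/-- The square root of a positive semidefinite matrix, as defined in the older Mathlib
(`Matrix.PosSemidef.sqrt`, since removed). -/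
def Matrix.PosSemidef.sqrt {n 𝕜 : Type*} [Fintype n] [DecidableEq n] [RCLike 𝕜]
    {A : Matrix n n 𝕜} (hA : A.PosSemidef) : Matrix n n 𝕜 :=
  (hA.1.eigenvectorUnitary : Matrix n n 𝕜) *
    diagonal (fun i => ((√(hA.1.eigenvalues i) : ℝ) : 𝕜)) *
    (star hA.1.eigenvectorUnitary : Matrix n n 𝕜)

/-- The trace norm `‖A‖₁ = Tr √(A* A)`. -/
def traceNorm {m n : Type*} [Fintype m] [Fintype n] [DecidableEq n]
    (A : Matrix m n ℂ) : ℝ :=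
  (Matrix.posSemidef_conjTranspose_mul_self A).sqrt.trace.re

/-- The spectral norm (operator norm w.r.t. Euclidean norms). -/
def specNorm {m n : Type*} [Fintype m] [Fintype n] [DecidableEq n]
    (A : Matrix m n ℂ) : ℝ :=
  ‖LinearMap.toContinuousLinearMap (Matrix.toEuclideanLin A)‖

/-- The Frobenius norm `‖A‖₂ = √Tr(A*A)`. -/
def frobeniusNorm {m n : Type*} [Fintype m] [Fintype n] (A : Matrix m n ℂ) : ℝ :=
  Real.sqrt ((Aᴴ * A).trace.re)

/-- Partial trace over the first tensor factor. -/
def ptraceFst {y z : Type*} [Fintype y] (M : Matrix (y × z) (y × z) ℂ) : Matrix z z ℂ :=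
  Matrix.of fun a b => ∑ i, M (i, a) (i, b)

/-- Partial trace over the second tensor factor. -/
def ptraceSnd {y z : Type*} [Fintype z] (M : Matrix (y × z) (y × z) ℂ) : Matrix y y ℂ :=
  Matrix.of fun i j => ∑ a, M (i, a) (j, a)

/-- The super-operator `Φ ⊗ 1_{L(W)}`, for `Φ : L(X) → L(Y)` and `W` indexed by `k`. -/
def tensorId {n m : Type*} [Fintype n] [Fintype m] (k : Type*) [Fintype k]
    (Φ : Matrix n n ℂ →ₗ[ℂ] Matrix m m ℂ) :
    Matrix (n × k) (n × k) ℂ →ₗ[ℂ] Matrix (m × k) (m × k) ℂ where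
  toFun M := Matrix.of fun p q => Φ (Matrix.of fun i j => M (i, p.2) (j, q.2)) p.1 q.1
  map_add' M N := by
    ext p q
    show Φ (Matrix.of fun i j => (M + N) (i, p.2) (j, q.2)) p.1 q.1 =
      Φ (Matrix.of fun i j => M (i, p.2) (j, q.2)) p.1 q.1 +
        Φ (Matrix.of fun i j => N (i, p.2) (j, q.2)) p.1 q.1
    have h : (Matrix.of fun i j => (M + N) (i, p.2) (j, q.2)) =
        (Matrix.of fun i j => M (i, p.2) (j, q.2)) +
          (Matrix.of fun i j => N (i, p.2) (j, q.2)) := rfl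
    rw [h, map_add]; rfl
  map_smul' c M := by
    ext p q
    show Φ (Matrix.of fun i j => (c • M) (i, p.2) (j, q.2)) p.1 q.1 =
      (c • Φ (Matrix.of fun i j => M (i, p.2) (j, q.2))) p.1 q.1
    have h : (Matrix.of fun i j => (c • M) (i, p.2) (j, q.2)) =
        c • (Matrix.of fun i j => M (i, p.2) (j, q.2)) := rfl
    rw [h, _root_.map_smul]

/-- The trace norm induced on super-operators. -/
def inducedTraceNorm {a b : Type*} [Fintype a] [DecidableEq a] [Fintype b] [DecidableEq b]
    (Φ : Matrix a a ℂ →ₗ[ℂ] Matrix b b ℂ) : ℝ :=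
  sSup {x : ℝ | ∃ X : Matrix a a ℂ, traceNorm X ≤ 1 ∧ x = traceNorm (Φ X)}

/-- The completely bounded trace norm (diamond norm):
`sup over k ≥ 1 of ‖Φ ⊗ 1_{L(ℂᵏ)}‖₁`. -/
def diamondNorm {n m : Type*} [Fintype n] [DecidableEq n] [Fintype m] [DecidableEq m]
    (Φ : Matrix n n ℂ →ₗ[ℂ] Matrix m m ℂ) : ℝ :=
  ⨆ k : ℕ, inducedTraceNorm (tensorId (Fin (k + 1)) Φ)


/-- Choi–Jamiołkowski representation `J(Φ) = Σ_{i,j} Φ(E_{i,j}) ⊗ E_{i,j}`. -/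
def choi {n m : Type*} [Fintype n] [DecidableEq n] [Fintype m]
    (Φ : Matrix n n ℂ →ₗ[ℂ] Matrix m m ℂ) : Matrix (m × n) (m × n) ℂ :=
  ∑ i : n, ∑ j : n, (Φ (Matrix.single i j 1)) ⊗ₖ (Matrix.single i j 1)

/-- A quantum channel: a completely positive and trace-preserving super-operator. -/
def IsQuantumChannel {n m : Type*} [Fintype n] [Fintype m]
    (Φ : Matrix n n ℂ →ₗ[ℂ] Matrix m m ℂ) : Prop :=
  (∀ (k : ℕ) (P : Matrix (n × Fin k) (n × Fin k) ℂ), P.PosSemidef →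
      (tensorId (Fin k) Φ P).PosSemidef) ∧
    ∀ X : Matrix n n ℂ, (Φ X).trace = X.trace

open Classical in
/-- Square root of a positive semidefinite matrix (junk value `0` otherwise). -/
def matSqrt {r : Type*} [Fintype r] [DecidableEq r] (P : Matrix r r ℂ) : Matrix r r ℂ :=
  if h : P.PosSemidef then h.sqrt else 0

/-- The fidelity `F(P,Q) = ‖√P √Q‖₁`. -/
def fidelity {r : Type*} [Fintype r] [DecidableEq r] (P Q : Matrix r r ℂ) : ℝ :=
  traceNorm (matSqrt P * matSqrt Q)


/-!
Reshape `u` and `v` into `Y × Z` matrices `B` and `C`, so that `P = Bᴴ B` and `Q = Cᴴ C`.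

Upper bound: write a feasible `W` as `Sᴴ S` and put `y = S v`, so that `⟨v v*, W⟩ = ‖y‖²`.
Stacking the rows of `S` (reshaped) gives `R` with `Rᴴ R = Tr_Y W`, and stacking the blocks
`x_p C` for the unit vector `x = y / ‖y‖` gives `N` with `Nᴴ N = Q` and `tr (Nᴴ R) = ‖y‖`.
With the polar decomposition `N = Ω |N|`, Hölder's inequality `|tr (Kᴴ M)| ≤ tr |M|` for the
contraction `K = Ω` bounds `|tr (Nᴴ R)|` by `tr √(|N| Rᴴ R |N|) = F(Rᴴ R, Q)`, and operator
monotonicity of the square root gives `F(Tr_Y W, Q) ≤ F(P, Q)`.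

Attainment: if `Ω` is the partial isometry of the polar decomposition of `C √P`, the vector `w`
reshaped from `Ω √P` has `Tr_Y (w w*) = √P Ωᴴ Ω √P ≤ P` and
`|⟨v, w⟩| = tr |C √P| = F(Q, P) = F(P, Q)`.
-/

open scoped MatrixOrder

namespace Matrix

variable {k n : Type*} [Fintype k] [Fintype n]

lemma PosSemidef.sqrt_eq_cfcSqrt [DecidableEq n] {A : Matrix n n ℂ} (hA : A.PosSemidef) :
    hA.sqrt = CFC.sqrt A := by
  rw [CFC.sqrt_eq_real_sqrt A hA.nonneg, cfcₙ_eq_cfc, hA.1.cfc_eq]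
  rfl

lemma conjTranspose_sqrt [DecidableEq n] (A : Matrix n n ℂ) : (CFC.sqrt A)ᴴ = CFC.sqrt A :=
  (CFC.sqrt_nonneg A).isSelfAdjoint

lemma re_trace_nonneg {A : Matrix n n ℂ} (hA : 0 ≤ A) : 0 ≤ A.trace.re :=
  (Complex.nonneg_iff.mp hA.posSemidef.trace_nonneg).1

lemma re_trace_le_re_trace {A B : Matrix n n ℂ} (h : A ≤ B) : A.trace.re ≤ B.trace.re := by
  have := re_trace_nonneg (sub_nonneg.mpr h)
  rwa [trace_sub, Complex.sub_re, sub_nonneg] at this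

lemma re_trace_conjTranspose_mul_mul_le [DecidableEq k] {Y : Matrix k k ℂ} (hY : Y ≤ 1)
    (B : Matrix k n ℂ) : (Bᴴ * Y * B).trace.re ≤ (Bᴴ * B).trace.re := by
  have := re_trace_nonneg ((le_iff.mp hY).conjTranspose_mul_mul_same B).nonneg
  rwa [Matrix.mul_sub, Matrix.sub_mul, Matrix.mul_one, trace_sub, Complex.sub_re,
    sub_nonneg] at this

-- The `L²` operator norm makes square matrices a C⋆-algebra, where `CFC.sqrt` is operator monotone.
open scoped Matrix.Norms.L2Operator in
lemma re_trace_sqrt_le_re_trace_sqrt [DecidableEq n] {A B : Matrix n n ℂ} (h : A ≤ B) :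
    (CFC.sqrt A).trace.re ≤ (CFC.sqrt B).trace.re :=
  re_trace_le_re_trace (CFC.sqrt_le_sqrt A B h)

lemma IsHermitian.le_one_of_isIdempotentElem [DecidableEq n] {F : Matrix n n ℂ}
    (hF : F.IsHermitian) (h : IsIdempotentElem F) : F ≤ 1 := by
  have hsq : (1 - F)ᴴ * (1 - F) = 1 - F := by
    rw [conjTranspose_sub, conjTranspose_one, hF.eq, h.one_sub.eq]
  exact le_iff.mpr (hsq ▸ posSemidef_conjTranspose_mul_self (1 - F))

def IsPartialIsometry (Ω : Matrix k n ℂ) : Prop := Ω * Ωᴴ * Ω = Ω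

lemma IsPartialIsometry.mul_conjTranspose_le_one [DecidableEq k] {Ω : Matrix k n ℂ}
    (h : IsPartialIsometry Ω) : Ω * Ωᴴ ≤ 1 :=
  (isHermitian_mul_conjTranspose_self Ω).le_one_of_isIdempotentElem <| by
    rw [IsIdempotentElem, ← Matrix.mul_assoc, h]

lemma IsPartialIsometry.conjTranspose_mul_le_one [DecidableEq n] {Ω : Matrix k n ℂ}
    (h : IsPartialIsometry Ω) : Ωᴴ * Ω ≤ 1 :=
  (isHermitian_conjTranspose_mul_self Ω).le_one_of_isIdempotentElem <| by
    rw [IsIdempotentElem, Matrix.mul_assoc, ← Matrix.mul_assoc Ω, h]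

lemma cfc_mul_cfc [DecidableEq n] (H : Matrix n n ℂ) (f g : ℝ → ℝ) :
    cfc f H * cfc g H = cfc (fun x => f x * g x) H :=
  (cfc_mul f g H (H.finite_real_spectrum.continuousOn f)
    (H.finite_real_spectrum.continuousOn g)).symm

-- Since `0⁻¹ = 0` in `ℝ`, `cfc (·⁻¹) H` is the Moore–Penrose inverse of `H`.
lemma mul_cfc_inv_mul_cancel [DecidableEq n] {H : Matrix n n ℂ} (hH : IsSelfAdjoint H) :
    H * cfc (·⁻¹ : ℝ → ℝ) H * H = H := by
  calc H * cfc (·⁻¹ : ℝ → ℝ) H * H = cfc id H * cfc (·⁻¹ : ℝ → ℝ) H * cfc id H := by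
        rw [cfc_id ℝ H hH]
    _ = cfc (fun x : ℝ => x * x⁻¹ * x) H := by rw [cfc_mul_cfc, cfc_mul_cfc]; rfl
    _ = H := by simp only [mul_inv_mul_cancel]; exact cfc_id' ℝ H hH

lemma cfc_inv_mul_mul_cfc_inv_cancel [DecidableEq n] {H : Matrix n n ℂ} (hH : IsSelfAdjoint H) :
    cfc (·⁻¹ : ℝ → ℝ) H * H * cfc (·⁻¹ : ℝ → ℝ) H = cfc (·⁻¹ : ℝ → ℝ) H := by
  calc cfc (·⁻¹ : ℝ → ℝ) H * H * cfc (·⁻¹ : ℝ → ℝ) H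
        = cfc (·⁻¹ : ℝ → ℝ) H * cfc id H * cfc (·⁻¹ : ℝ → ℝ) H := by rw [cfc_id ℝ H hH]
    _ = cfc (fun x : ℝ => x⁻¹ * x * x⁻¹) H := by rw [cfc_mul_cfc, cfc_mul_cfc]; rfl
    _ = cfc (·⁻¹ : ℝ → ℝ) H := by
        simpa only [inv_inv] using
          congrArg (cfc · H) (funext fun x : ℝ => mul_inv_mul_cancel x⁻¹)

/-- Polar decomposition `X = Ω |X|`. -/
theorem exists_isPartialIsometry_mul_sqrt [DecidableEq n] (X : Matrix k n ℂ) :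
    ∃ Ω : Matrix k n ℂ, IsPartialIsometry Ω ∧ Ω * CFC.sqrt (Xᴴ * X) = X ∧
      Ωᴴ * X = CFC.sqrt (Xᴴ * X) := by
  set H := CFC.sqrt (Xᴴ * X)
  have hH : IsSelfAdjoint H := (CFC.sqrt_nonneg _).isSelfAdjoint
  have hXX : Xᴴ * X = H * H :=
    (CFC.sqrt_mul_sqrt_self _ (posSemidef_conjTranspose_mul_self X).nonneg).symm
  set S := cfc (·⁻¹ : ℝ → ℝ) H
  have hS : Sᴴ = S := IsSelfAdjoint.cfc
  have hSH : S * H = H * S := by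
    simpa only [cfc_id' ℝ H hH] using (cfc_commute_cfc (·⁻¹ : ℝ → ℝ) (fun x => x) H).eq
  have hSHH : S * (H * H) = H := by
    rw [← Matrix.mul_assoc, hSH, mul_cfc_inv_mul_cancel hH]
  refine ⟨X * S, ?_, ?_, ?_⟩
  · rw [IsPartialIsometry, conjTranspose_mul, hS,
      show X * S * (S * Xᴴ) * (X * S) = X * (S * (S * (Xᴴ * X)) * S) by
        simp only [Matrix.mul_assoc], hXX, hSHH, cfc_inv_mul_mul_cfc_inv_cancel hH]
  · have : Xᴴ * X * (S * H - 1) = 0 := by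
      rw [hXX, Matrix.mul_sub, Matrix.mul_one, Matrix.mul_assoc, ← Matrix.mul_assoc H S,
        mul_cfc_inv_mul_cancel hH, sub_self]
    rw [conjTranspose_mul_self_mul_eq_zero, Matrix.mul_sub, Matrix.mul_one, sub_eq_zero] at this
    rw [Matrix.mul_assoc, this]
  · rw [conjTranspose_mul, hS, Matrix.mul_assoc, hXX, hSHH]

lemma inner_toLp_uncurry (A B : Matrix k n ℂ) :
    inner ℂ (WithLp.toLp 2 (Function.uncurry A)) (WithLp.toLp 2 (Function.uncurry B)) =
      (Aᴴ * B).trace := by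
  simp only [EuclideanSpace.inner_toLp_toLp, dotProduct, trace, diag, mul_apply,
    conjTranspose_apply, Fintype.sum_prod_type, Pi.star_apply, RCLike.star_def]
  rw [Finset.sum_comm]
  simp_rw [mul_comm]
  rfl

lemma norm_trace_conjTranspose_mul_le (A B : Matrix k n ℂ) :
    ‖(Aᴴ * B).trace‖ ≤ √(Aᴴ * A).trace.re * √(Bᴴ * B).trace.re := by
  have := norm_inner_le_norm (𝕜 := ℂ) (WithLp.toLp 2 (Function.uncurry A))
    (WithLp.toLp 2 (Function.uncurry B))
  rwa [inner_toLp_uncurry, norm_eq_sqrt_re_inner (𝕜 := ℂ) (WithLp.toLp 2 (Function.uncurry A)),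
    norm_eq_sqrt_re_inner (𝕜 := ℂ) (WithLp.toLp 2 (Function.uncurry B)), inner_toLp_uncurry,
    inner_toLp_uncurry] at this

/-- Hölder's inequality for the trace norm against a contraction. -/
theorem norm_trace_conjTranspose_mul_le_re_trace_sqrt [DecidableEq k] [DecidableEq n]
    {K : Matrix k n ℂ} (hK : K * Kᴴ ≤ 1) (M : Matrix k n ℂ) :
    ‖(Kᴴ * M).trace‖ ≤ (CFC.sqrt (Mᴴ * M)).trace.re := by
  obtain ⟨Ω, -, hΩH, hΩM⟩ := exists_isPartialIsometry_mul_sqrt M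
  set H := CFC.sqrt (Mᴴ * M)
  set G := CFC.sqrt H
  have hGG : G * G = H := CFC.sqrt_mul_sqrt_self H (CFC.sqrt_nonneg _)
  have hG : Gᴴ = G := conjTranspose_sqrt H
  set A := G * Ωᴴ * K
  have htr : (Kᴴ * M).trace = (Aᴴ * G).trace := by
    rw [← hΩH, ← hGG]
    simp only [A, conjTranspose_mul, conjTranspose_conjTranspose, hG, Matrix.mul_assoc]
  have hA : (Aᴴ * A).trace.re ≤ H.trace.re := by
    have hAA : A * Aᴴ = (Ω * G)ᴴ * (K * Kᴴ) * (Ω * G) := by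
      simp only [A, conjTranspose_mul, conjTranspose_conjTranspose, hG, Matrix.mul_assoc]
    have hΩG : ((Ω * G)ᴴ * (Ω * G)).trace = H.trace := by
      rw [conjTranspose_mul, hG, Matrix.mul_assoc, trace_mul_comm, Matrix.mul_assoc,
        Matrix.mul_assoc, hGG, hΩH, hΩM]
    rw [trace_mul_comm, hAA, ← hΩG]
    exact re_trace_conjTranspose_mul_mul_le hK _
  calc ‖(Kᴴ * M).trace‖ ≤ √(Aᴴ * A).trace.re * √(Gᴴ * G).trace.re :=
        htr ▸ norm_trace_conjTranspose_mul_le A G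
    _ ≤ √H.trace.re * √H.trace.re := by
        rw [hG, hGG]
        gcongr
    _ = H.trace.re := Real.mul_self_sqrt (re_trace_nonneg (CFC.sqrt_nonneg _))

lemma trace_sqrt_conjTranspose_mul_self_comm [DecidableEq k] [DecidableEq n]
    (X : Matrix k n ℂ) : (CFC.sqrt (Xᴴ * X)).trace = (CFC.sqrt (X * Xᴴ)).trace := by
  obtain ⟨Ω, -, hΩH, hΩX⟩ := exists_isPartialIsometry_mul_sqrt X
  set H := CFC.sqrt (Xᴴ * X)
  have hH : H.PosSemidef := (CFC.sqrt_nonneg _).posSemidef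
  have hΩΩH : Ωᴴ * Ω * H = H := by rw [Matrix.mul_assoc, hΩH, hΩX]
  have hsqrt : CFC.sqrt (X * Xᴴ) = Ω * H * Ωᴴ := by
    refine CFC.sqrt_unique ?_ (hH.mul_mul_conjTranspose_same Ω).nonneg
    calc Ω * H * Ωᴴ * (Ω * H * Ωᴴ) = Ω * H * (Ωᴴ * Ω * H) * Ωᴴ := by
          simp only [Matrix.mul_assoc]
      _ = (Ω * H) * (Ω * H)ᴴ := by
          rw [hΩΩH, conjTranspose_mul, hH.1.eq, Matrix.mul_assoc]
      _ = X * Xᴴ := by rw [hΩH]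
  rw [hsqrt, trace_mul_comm, ← Matrix.mul_assoc, hΩΩH]

end Matrix

section Fidelity

variable {k n : Type*} [Fintype k] [Fintype n] [DecidableEq n]

lemma traceNorm_eq_re_trace_sqrt (A : Matrix k n ℂ) :
    traceNorm A = (CFC.sqrt (Aᴴ * A)).trace.re := by
  rw [traceNorm, PosSemidef.sqrt_eq_cfcSqrt]

lemma traceNorm_conjTranspose [DecidableEq k] (X : Matrix k n ℂ) :
    traceNorm Xᴴ = traceNorm X := by
  rw [traceNorm_eq_re_trace_sqrt, traceNorm_eq_re_trace_sqrt, conjTranspose_conjTranspose,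
    trace_sqrt_conjTranspose_mul_self_comm]

lemma matSqrt_eq_cfcSqrt {P : Matrix n n ℂ} (hP : 0 ≤ P) : matSqrt P = CFC.sqrt P := by
  rw [matSqrt, dif_pos hP.posSemidef, PosSemidef.sqrt_eq_cfcSqrt]

lemma fidelity_nonneg (P Q : Matrix n n ℂ) : 0 ≤ fidelity P Q := by
  rw [fidelity, traceNorm_eq_re_trace_sqrt]
  exact re_trace_nonneg (CFC.sqrt_nonneg _)

lemma fidelity_eq_re_trace_sqrt {P Q : Matrix n n ℂ} (hP : 0 ≤ P) (hQ : 0 ≤ Q) :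
    fidelity P Q = (CFC.sqrt (CFC.sqrt Q * P * CFC.sqrt Q)).trace.re := by
  rw [fidelity, matSqrt_eq_cfcSqrt hP, matSqrt_eq_cfcSqrt hQ, traceNorm_eq_re_trace_sqrt,
    conjTranspose_mul, conjTranspose_sqrt, conjTranspose_sqrt, Matrix.mul_assoc,
    ← Matrix.mul_assoc (CFC.sqrt P), CFC.sqrt_mul_sqrt_self P hP, Matrix.mul_assoc]

lemma fidelity_comm {P Q : Matrix n n ℂ} (hP : 0 ≤ P) (hQ : 0 ≤ Q) :
    fidelity P Q = fidelity Q P := by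
  rw [fidelity, fidelity, matSqrt_eq_cfcSqrt hP, matSqrt_eq_cfcSqrt hQ,
    ← traceNorm_conjTranspose, conjTranspose_mul, conjTranspose_sqrt, conjTranspose_sqrt]

lemma fidelity_le_fidelity_of_le {A P Q : Matrix n n ℂ} (hA : 0 ≤ A) (hAP : A ≤ P)
    (hQ : 0 ≤ Q) : fidelity A Q ≤ fidelity P Q := by
  rw [fidelity_eq_re_trace_sqrt hA hQ, fidelity_eq_re_trace_sqrt (hA.trans hAP) hQ]
  refine re_trace_sqrt_le_re_trace_sqrt ?_
  simpa only [star_eq_conjTranspose, conjTranspose_sqrt] using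
    star_left_conjugate_le_conjugate hAP (CFC.sqrt Q)

theorem norm_trace_conjTranspose_mul_le_fidelity [DecidableEq k] (R N : Matrix k n ℂ) :
    ‖(Nᴴ * R).trace‖ ≤ fidelity (Rᴴ * R) (Nᴴ * N) := by
  obtain ⟨Ω, hΩ, hΩH, -⟩ := exists_isPartialIsometry_mul_sqrt N
  set H := CFC.sqrt (Nᴴ * N)
  have hH : Hᴴ = H := conjTranspose_sqrt _
  have htr : (Nᴴ * R).trace = (Ωᴴ * (R * H)).trace := by
    rw [← hΩH, conjTranspose_mul, hH, Matrix.mul_assoc, trace_mul_comm, Matrix.mul_assoc]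
  rw [htr, fidelity_eq_re_trace_sqrt (posSemidef_conjTranspose_mul_self R).nonneg
    (posSemidef_conjTranspose_mul_self N).nonneg]
  convert norm_trace_conjTranspose_mul_le_re_trace_sqrt hΩ.mul_conjTranspose_le_one (R * H)
    using 4
  rw [conjTranspose_mul, hH]
  simp only [H, Matrix.mul_assoc]

theorem exists_norm_trace_eq_fidelity {P : Matrix n n ℂ} (hP : 0 ≤ P) (C : Matrix k n ℂ) :
    ∃ D : Matrix k n ℂ, Dᴴ * D ≤ P ∧ ‖(Cᴴ * D).trace‖ = fidelity P (Cᴴ * C) := by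
  obtain ⟨Ω, hΩ, -, hΩM⟩ := exists_isPartialIsometry_mul_sqrt (C * CFC.sqrt P)
  have hS := conjTranspose_sqrt P
  refine ⟨Ω * CFC.sqrt P, ?_, ?_⟩
  · calc (Ω * CFC.sqrt P)ᴴ * (Ω * CFC.sqrt P) = star (CFC.sqrt P) * (Ωᴴ * Ω) * CFC.sqrt P := by
          rw [conjTranspose_mul, star_eq_conjTranspose, hS]
          simp only [Matrix.mul_assoc]
      _ ≤ star (CFC.sqrt P) * 1 * CFC.sqrt P :=
          star_left_conjugate_le_conjugate hΩ.conjTranspose_mul_le_one _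
      _ = P := by rw [star_eq_conjTranspose, hS, Matrix.mul_one, CFC.sqrt_mul_sqrt_self P hP]
  · have hCP : (C * CFC.sqrt P)ᴴ * (C * CFC.sqrt P) = CFC.sqrt P * (Cᴴ * C) * CFC.sqrt P := by
      rw [conjTranspose_mul, hS]
      simp only [Matrix.mul_assoc]
    have htr : (Cᴴ * (Ω * CFC.sqrt P)).trace =
        (CFC.sqrt (CFC.sqrt P * (Cᴴ * C) * CFC.sqrt P)).trace := by
      rw [← hCP, ← conjTranspose_sqrt ((C * CFC.sqrt P)ᴴ * (C * CFC.sqrt P)), ← hΩM,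
        conjTranspose_mul, conjTranspose_conjTranspose, conjTranspose_mul, hS,
        ← Matrix.mul_assoc, trace_mul_comm, Matrix.mul_assoc]
    rw [fidelity_comm hP (posSemidef_conjTranspose_mul_self C).nonneg,
      fidelity_eq_re_trace_sqrt (posSemidef_conjTranspose_mul_self C).nonneg hP, htr]
    exact (Complex.re_eq_norm.mpr (CFC.sqrt_nonneg _).posSemidef.trace_nonneg).symm

end Fidelity

section PartialTrace

variable {κ Y Z : Type*} [Fintype Y]

def conjReshape (u : Y × Z → ℂ) : Matrix Y Z ℂ := of fun i a => star (u (i, a))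

lemma ptraceFst_vecMulVec (u : Y × Z → ℂ) :
    ptraceFst (vecMulVec u (star u)) = (conjReshape u)ᴴ * conjReshape u := by
  ext a b
  simp [ptraceFst, conjReshape, mul_apply, vecMulVec_apply]

lemma trace_conjTranspose_conjReshape_mul [Fintype Z] (v w : Y × Z → ℂ) :
    ((conjReshape v)ᴴ * conjReshape w).trace = star w ⬝ᵥ v := by
  simp only [trace, conjReshape, RCLike.star_def, diag_apply, mul_apply, conjTranspose_apply,
    of_apply, RingHomCompTriple.comp_apply, RingHom.id_apply, dotProduct, Pi.star_apply, mul_comm,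
    Fintype.sum_prod_type]
  exact Finset.sum_comm

def stackRows (S : Matrix κ (Y × Z) ℂ) : Matrix (κ × Y) Z ℂ := of fun q a => S q.1 (q.2, a)

lemma ptraceFst_conjTranspose_mul_self [Fintype κ] (S : Matrix κ (Y × Z) ℂ) :
    ptraceFst (Sᴴ * S) = (stackRows S)ᴴ * stackRows S := by
  ext a b
  simp only [ptraceFst, stackRows, of_apply, mul_apply, conjTranspose_apply, Fintype.sum_prod_type]
  exact Finset.sum_comm

lemma ptraceFst_nonneg [Fintype Z] [DecidableEq Y] [DecidableEq Z]
    {W : Matrix (Y × Z) (Y × Z) ℂ} (hW : 0 ≤ W) : 0 ≤ ptraceFst W := by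
  obtain ⟨S, rfl⟩ := CStarAlgebra.nonneg_iff_eq_star_mul_self.mp hW
  rw [star_eq_conjTranspose, ptraceFst_conjTranspose_mul_self]
  exact (posSemidef_conjTranspose_mul_self _).nonneg

def stackSMul (x : κ → ℂ) (C : Matrix Y Z ℂ) : Matrix (κ × Y) Z ℂ := of fun q a => x q.1 * C q.2 a

lemma conjTranspose_stackSMul_mul_self [Fintype κ] (x : κ → ℂ) (C : Matrix Y Z ℂ) :
    (stackSMul x C)ᴴ * stackSMul x C = (star x ⬝ᵥ x) • (Cᴴ * C) := by
  ext a a'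
  rw [mul_apply, Fintype.sum_prod_type, Matrix.smul_apply, mul_apply, smul_eq_mul, dotProduct,
    Finset.sum_mul_sum]
  refine Finset.sum_congr rfl fun p _ => Finset.sum_congr rfl fun i _ => ?_
  simp only [stackSMul, conjTranspose_apply, of_apply, star_mul', Pi.star_apply]
  ring

lemma trace_conjTranspose_stackSMul_mul_stackRows [Fintype κ] [Fintype Z] (x : κ → ℂ)
    (v : Y × Z → ℂ) (S : Matrix κ (Y × Z) ℂ) :
    ((stackSMul x (conjReshape v))ᴴ * stackRows S).trace = star x ⬝ᵥ (S *ᵥ v) := by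
  simp only [trace, diag, mul_apply, conjTranspose_apply, stackSMul, stackRows, conjReshape,
    of_apply, star_mul', star_star, dotProduct, mulVec, Pi.star_apply, Finset.mul_sum]
  rw [Finset.sum_comm, Fintype.sum_prod_type]
  refine Finset.sum_congr rfl fun p _ => ?_
  rw [Fintype.sum_prod_type]
  exact Finset.sum_congr rfl fun i _ => Finset.sum_congr rfl fun a _ => by ring

end PartialTrace

section VecMulVec

variable {ι : Type*} [Fintype ι]

lemma trace_conjTranspose_vecMulVec_mul (v : ι → ℂ) (W : Matrix ι ι ℂ) :
    ((vecMulVec v (star v))ᴴ * W).trace = star v ⬝ᵥ (W *ᵥ v) := by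
  rw [conjTranspose_vecMulVec, star_star, vecMulVec_mul, trace_vecMulVec, dotProduct_comm,
    dotProduct_mulVec]

lemma star_dotProduct_vecMulVec_mulVec (v w : ι → ℂ) :
    star v ⬝ᵥ (vecMulVec w (star w) *ᵥ v) = ‖star w ⬝ᵥ v‖ ^ 2 := by
  rw [vecMulVec_mulVec, dotProduct_smul, MulOpposite.smul_eq_mul_unop, MulOpposite.unop_op,
    star_dotProduct, ← Complex.conj_mul']
  rfl

end VecMulVec

theorem re_star_dotProduct_mulVec_le_fidelity_sq {Y Z : Type*} [Fintype Y] [Fintype Z]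
    [DecidableEq Y] [DecidableEq Z] {W : Matrix (Y × Z) (Y × Z) ℂ} (hW : 0 ≤ W)
    (v : Y × Z → ℂ) :
    (star v ⬝ᵥ (W *ᵥ v)).re ≤ fidelity (ptraceFst W) (ptraceFst (vecMulVec v (star v))) ^ 2 := by
  obtain ⟨S, rfl⟩ := CStarAlgebra.nonneg_iff_eq_star_mul_self.mp hW
  rw [star_eq_conjTranspose, ← mulVec_mulVec, dotProduct_mulVec, ← star_mulVec,
    ptraceFst_vecMulVec, ptraceFst_conjTranspose_mul_self]
  set y := S *ᵥ v
  obtain ⟨b, hb0, hb⟩ : ∃ b : ℝ, 0 ≤ b ∧ (b : ℂ) = star y ⬝ᵥ y :=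
    RCLike.nonneg_iff_exists_ofReal.mp (dotProduct_star_self_nonneg y)
  rw [← hb, Complex.ofReal_re]
  rcases hb0.eq_or_lt with rfl | hb_pos
  · positivity
  set x := ((√b)⁻¹ : ℂ) • y
  have hxy : star x ⬝ᵥ y = √b := by
    simp only [x, star_smul, smul_dotProduct, ← hb, smul_eq_mul, Complex.star_def, map_inv₀,
      Complex.conj_ofReal]
    norm_cast
    rw [inv_mul_eq_div, Real.div_sqrt]
  have hx : star x ⬝ᵥ x = 1 := by
    simp only [x, dotProduct_smul, hxy, smul_eq_mul]
    norm_cast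
    exact inv_mul_cancel₀ (Real.sqrt_pos.mpr hb_pos).ne'
  have := norm_trace_conjTranspose_mul_le_fidelity (stackRows S) (stackSMul x (conjReshape v))
  rw [trace_conjTranspose_stackSMul_mul_stackRows, hxy, conjTranspose_stackSMul_mul_self, hx,
    one_smul, Complex.norm_real, Real.norm_of_nonneg (Real.sqrt_nonneg _)] at this
  calc b = √b ^ 2 := (Real.sq_sqrt hb_pos.le).symm
    _ ≤ _ := by gcongr

/-- SDP form of Uhlmann's theorem. -/
theorem uhlmann_sdp {m r : ℕ} (u v : Fin m × Fin r → ℂ) :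
    IsGreatest {x : ℝ | ∃ W : Matrix (Fin m × Fin r) (Fin m × Fin r) ℂ,
        W.PosSemidef ∧
        (ptraceFst (vecMulVec u (star u)) - ptraceFst W).PosSemidef ∧
        x = ((vecMulVec v (star v))ᴴ * W).trace.re}
      (fidelity (ptraceFst (vecMulVec u (star u)))
        (ptraceFst (vecMulVec v (star v))) ^ 2) := by
  have hP := ptraceFst_nonneg (posSemidef_vecMulVec_self_star u).nonneg
  have hQ := ptraceFst_nonneg (posSemidef_vecMulVec_self_star v).nonneg
  refine ⟨?_, ?_⟩
  · obtain ⟨D, hDP, hD⟩ := exists_norm_trace_eq_fidelity hP (conjReshape v)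
    set w : Fin m × Fin r → ℂ := fun p => star (D p.1 p.2)
    have hw : conjReshape w = D := by ext; simp [w, conjReshape]
    refine ⟨vecMulVec w (star w), posSemidef_vecMulVec_self_star w, ?_, ?_⟩
    · rw [ptraceFst_vecMulVec w, hw]; exact hDP
    · rw [trace_conjTranspose_vecMulVec_mul, star_dotProduct_vecMulVec_mulVec,
        ← trace_conjTranspose_conjReshape_mul, hw, hD, ← ptraceFst_vecMulVec v,
        ← Complex.ofReal_pow, Complex.ofReal_re]
  · rintro x ⟨W, hW, hWP, rfl⟩
    rw [trace_conjTranspose_vecMulVec_mul]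
    refine (re_star_dotProduct_mulVec_le_fidelity_sq hW.nonneg v).trans ?_
    exact pow_le_pow_left₀ (fidelity_nonneg _ _)
      (fidelity_le_fidelity_of_le (ptraceFst_nonneg hW.nonneg) hWP hQ) 2

end
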